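/- Let f be a finite composition of generalized Hénon maps over ℂ and let d = deg(f) ≥ 2 be its degree. Then the sequence of functions G_n(p) = d^{-n} log⁺ ‖f^n(p)‖ converges, uniformly on every bounded subset of ℂ², to a continuous function G⁺ : ℂ² → [0, ∞) which satisfies: (1) G⁺(f(p)) = d · G⁺(p) for all p ∈ ℂ²; (2) the function p ↦ G⁺(p) − log⁺‖p‖ is bounded from above on ℂ²; (3) G⁺(p) = 0 if and only if the forward orbit (f^n(p))_{n ≥ 0} is bounded. -/

import Mathlib

noncomputable section

/-- The generalized Hénon map associated to data `(a, P)`: `(x,y) ↦ (a y, x + P(y))`. -/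
def genHenonMap (c : ℂ × Polynomial ℂ) : ℂ × ℂ → ℂ × ℂ :=
  fun p => (c.1 * p.2, p.1 + c.2.eval p.2)

/-!
Put `φ = log⁺ ‖·‖` and `Gₙ = d⁻ⁿ · φ ∘ fⁿ`. A Hénon map `h` of degree `m` satisfies
`φ ∘ h ≤ m φ + C` everywhere, and for large `R` it maps the region
`V_R = {‖x‖ ≤ ‖y‖, R ≤ ‖y‖}` into itself with `φ ∘ h ≥ m φ - C` there. Off `V_R` it cannot push
the norm above `max ‖p‖ (const)`: if `h (x, y) ∉ V_R` with `‖y‖` large, then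
`‖x + P(y)‖ ≤ max R (‖a‖ ‖y‖) ≪ ‖P(y)‖`, so `‖x‖` dominates `‖h (x, y)‖`. These estimates
survive composition, hence hold for `f` with degree `d`.

So on `V` the increments `G_{n+1} - Gₙ` are `O(d⁻ⁿ)`, and an orbit that has not yet entered `V`
stays in `{φ ≤ max (φ p) M}`, where the increments are `O(d⁻ⁿ)` as well. Summing gives locally
uniform convergence to `G`, with `G ∘ f = d G` and `G ≤ φ + const`. Once an orbit enters `V`,
`φ` grows like `dⁿ` along it, so `G > 0`; an orbit that never enters `V` is bounded.
-/

open Filter Topology Set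

section GreenFunction

variable {X : Type*} (f : X → X) (φ : X → ℝ) (d : ℝ)

def greenApprox (n : ℕ) (p : X) : ℝ := (d ^ n)⁻¹ * φ (f^[n] p)

/-- The limit of `greenApprox`, written as a telescoping series so that uniform convergence is an
instance of the Weierstrass M-test. -/
def green (p : X) : ℝ :=
  φ p + ∑' n, (greenApprox f φ d (n + 1) p - greenApprox f φ d n p)

structure DegreeFiltration (V : Set X) (m C M : ℝ) : Prop where
  le_mul_add : ∀ p, φ (f p) ≤ m * φ p + C
  mapsTo : MapsTo f V V
  mul_sub_le : ∀ p ∈ V, m * φ p - C ≤ φ (f p)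
  escape : ∀ p, f p ∉ V → φ (f p) ≤ max (φ p) M

variable {f φ d}

theorem greenApprox_zero (p : X) : greenApprox f φ d 0 p = φ p := by
  simp [greenApprox]

theorem greenApprox_apply (hd : d ≠ 0) (n : ℕ) (p : X) :
    greenApprox f φ d n (f p) = d * greenApprox f φ d (n + 1) p := by
  simp only [greenApprox, ← Function.iterate_succ_apply, pow_succ]
  field_simp

theorem greenApprox_succ_sub (hd : d ≠ 0) (n : ℕ) (p : X) :
    greenApprox f φ d (n + 1) p - greenApprox f φ d n p =
      d⁻¹ ^ n * ((φ (f (f^[n] p)) - d * φ (f^[n] p)) / d) := by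
  simp only [greenApprox, Function.iterate_succ_apply', pow_succ, inv_pow]
  field_simp

theorem greenApprox_eq_add_sum (n : ℕ) (p : X) :
    greenApprox f φ d n p =
      φ p + ∑ k ∈ Finset.range n, (greenApprox f φ d (k + 1) p - greenApprox f φ d k p) := by
  rw [Finset.sum_range_sub (greenApprox f φ d · p), greenApprox_zero, add_sub_cancel]

theorem continuous_greenApprox [TopologicalSpace X] (hf : Continuous f) (hφ : Continuous φ)
    (n : ℕ) : Continuous (greenApprox f φ d n) :=
  continuous_const.mul (hφ.comp (hf.iterate n))

namespace DegreeFiltration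

variable {V : Set X} {m C M : ℝ}

theorem id (M : ℝ) : DegreeFiltration id φ V 1 0 M where
  le_mul_add p := by simp
  mapsTo := mapsTo_id V
  mul_sub_le p _ := by simp
  escape p _ := le_max_left _ _

theorem comp {g : X → X} {m' C' M' : ℝ} (hf : DegreeFiltration f φ V m C M)
    (hg : DegreeFiltration g φ V m' C' M') (hm : 0 ≤ m) :
    DegreeFiltration (f ∘ g) φ V (m * m') (m * C' + C) (max M M') where
  le_mul_add p := by
    show φ (f (g p)) ≤ _
    have := mul_le_mul_of_nonneg_left (hg.le_mul_add p) hm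
    linarith [hf.le_mul_add (g p)]
  mapsTo := hf.mapsTo.comp hg.mapsTo
  mul_sub_le p hp := by
    show _ ≤ φ (f (g p))
    have := mul_le_mul_of_nonneg_left (hg.mul_sub_le p hp) hm
    linarith [hf.mul_sub_le (g p) (hg.mapsTo hp)]
  escape p hp := by
    have hgp : g p ∉ V := fun h => hp (hf.mapsTo h)
    exact (hf.escape (g p) hp).trans <| max_le
      ((hg.escape p hgp).trans (max_le_max_left _ (le_max_right _ _)))
      ((le_max_left _ _).trans (le_max_right _ _))

theorem iterate_escape (hf : DegreeFiltration f φ V m C M) {p : X} :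
    ∀ {n : ℕ}, f^[n] p ∉ V → φ (f^[n] p) ≤ max (φ p) M
  | 0, _ => le_max_left _ _
  | n + 1, hn => by
    rw [Function.iterate_succ_apply'] at hn ⊢
    have hprev : f^[n] p ∉ V := fun h => hn (hf.mapsTo h)
    exact (hf.escape _ hn).trans (max_le (hf.iterate_escape hprev) (le_max_right _ _))

theorem pow_mul_sub_le_iterate (hf : DegreeFiltration f φ V d C M) (hd : 1 ≤ d) {q : X}
    (hq : q ∈ V) (k : ℕ) :
    d ^ k * ((d - 1) * φ q - C) ≤ (d - 1) * φ (f^[k] q) - C := by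
  induction k with
  | zero => simp
  | succ k ih =>
    rw [Function.iterate_succ_apply', pow_succ]
    have hlow := mul_le_mul_of_nonneg_left (hf.mul_sub_le _ (hf.mapsTo.iterate k hq))
      (sub_nonneg.2 hd)
    nlinarith

variable (hF : DegreeFiltration f φ V d C M) (hd : 1 < d) (hC : 0 ≤ C) (hφ : ∀ p, 0 ≤ φ p)
include hF hd hC hφ

theorem abs_greenApprox_succ_sub_le (n : ℕ) (p : X) :
    |greenApprox f φ d (n + 1) p - greenApprox f φ d n p| ≤ (max (φ p) M + C) * d⁻¹ ^ n := by
  have hd0 : 0 < d := by linarith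
  set q := f^[n] p
  rw [greenApprox_succ_sub hd0.ne', abs_mul, abs_of_pos (by positivity), mul_comm]
  gcongr
  rw [abs_div, abs_of_pos hd0, div_le_iff₀ hd0]
  have hT : 0 ≤ max (φ p) M := (hφ p).trans (le_max_left _ _)
  have hup := hF.le_mul_add q
  by_cases hq : q ∈ V
  · have hlow := hF.mul_sub_le q hq
    rw [abs_le]; constructor <;> nlinarith
  · have hesc := hF.iterate_escape hq
    rw [abs_le]; constructor <;> nlinarith [hφ q, hφ (f q)]

theorem summable_greenApprox_succ_sub (p : X) :
    Summable fun n => greenApprox f φ d (n + 1) p - greenApprox f φ d n p :=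
  ((summable_geometric_of_lt_one (by positivity) (inv_lt_one_of_one_lt₀ hd)).mul_left _
    ).of_norm_bounded (hF.abs_greenApprox_succ_sub_le hd hC hφ · p)

theorem tendstoUniformlyOn_greenApprox (S : ℝ) :
    TendstoUniformlyOn (greenApprox f φ d) (green f φ d) atTop {p | φ p ≤ S} := by
  have hsum := tendstoUniformlyOn_tsum_nat
    ((summable_geometric_of_lt_one (by positivity) (inv_lt_one_of_one_lt₀ hd)).mul_left
      (max S M + C))
    (f := fun n p => greenApprox f φ d (n + 1) p - greenApprox f φ d n p) (s := {p | φ p ≤ S})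
    fun n p hp => (hF.abs_greenApprox_succ_sub_le hd hC hφ n p).trans (by gcongr; exact hp)
  have hconst : TendstoUniformlyOn (fun (_ : ℕ) => φ) φ atTop {p | φ p ≤ S} :=
    fun u hu => .of_forall fun _ _ _ => refl_mem_uniformity hu
  convert hconst.add hsum using 1
  · funext n p
    exact greenApprox_eq_add_sum n p
  · rfl

theorem tendsto_greenApprox (p : X) :
    Tendsto (greenApprox f φ d · p) atTop (𝓝 (green f φ d p)) :=
  (hF.tendstoUniformlyOn_greenApprox hd hC hφ (φ p)).tendsto_at (le_refl (φ p))

theorem green_nonneg (p : X) : 0 ≤ green f φ d p :=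
  ge_of_tendsto' (hF.tendsto_greenApprox hd hC hφ p) fun _ =>
    mul_nonneg (by positivity) (hφ _)

theorem green_apply (p : X) : green f φ d (f p) = d * green f φ d p := by
  refine tendsto_nhds_unique (hF.tendsto_greenApprox hd hC hφ (f p)) ?_
  simp only [greenApprox_apply (by positivity : d ≠ 0)]
  exact ((hF.tendsto_greenApprox hd hC hφ p).comp (tendsto_add_atTop_nat 1)).const_mul d

theorem green_le (p : X) : green f φ d p ≤ φ p + C * (1 - d⁻¹)⁻¹ := by
  have hd0 : 0 < d := by linarith
  have hr := summable_geometric_of_lt_one (by positivity) (inv_lt_one_of_one_lt₀ hd)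
  have hstep (n : ℕ) :
      greenApprox f φ d (n + 1) p - greenApprox f φ d n p ≤ C * d⁻¹ ^ n := by
    rw [greenApprox_succ_sub hd0.ne', mul_comm C]
    gcongr
    rw [div_le_iff₀ hd0]
    nlinarith [hF.le_mul_add (f^[n] p)]
  rw [green, ← tsum_geometric_of_lt_one (by positivity) (inv_lt_one_of_one_lt₀ hd),
    ← tsum_mul_left]
  exact add_le_add le_rfl
    ((hF.summable_greenApprox_succ_sub hd hC hφ p).tsum_le_tsum hstep (hr.mul_left C))

theorem green_pos (hV : ∀ q ∈ V, C < (d - 1) * φ q) {p : X} {N : ℕ} (hN : f^[N] p ∈ V) :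
    0 < green f φ d p := by
  set q := f^[N] p
  have hd0 : 0 < d := by linarith
  have hψ : 0 < (d - 1) * φ q - C := sub_pos.2 (hV q hN)
  have hlow (k : ℕ) :
      (d ^ N)⁻¹ * ((d - 1) * φ q - C) ≤ (d - 1) * greenApprox f φ d (k + N) p := by
    have hk := hF.pow_mul_sub_le_iterate hd.le hN k
    calc (d ^ N)⁻¹ * ((d - 1) * φ q - C)
        = (d ^ (k + N))⁻¹ * (d ^ k * ((d - 1) * φ q - C)) := by
          rw [pow_add]; field_simp
      _ ≤ (d ^ (k + N))⁻¹ * ((d - 1) * φ (f^[k] q)) :=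
          mul_le_mul_of_nonneg_left (by linarith) (by positivity)
      _ = (d - 1) * greenApprox f φ d (k + N) p := by
          rw [greenApprox, Function.iterate_add_apply]; ring
  have hlim :=
    ((hF.tendsto_greenApprox hd hC hφ p).comp (tendsto_add_atTop_nat N)).const_mul (d - 1)
  exact pos_of_mul_pos_right ((mul_pos (by positivity) hψ).trans_le (ge_of_tendsto' hlim hlow))
    (sub_pos.2 hd).le

theorem green_eq_zero_iff (hV : ∀ q ∈ V, C < (d - 1) * φ q) (p : X) :
    green f φ d p = 0 ↔ ∃ T, ∀ n, φ (f^[n] p) ≤ T := by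
  refine ⟨fun h => ?_, fun ⟨T, hT⟩ => ?_⟩
  · by_cases hN : ∃ N, f^[N] p ∈ V
    · obtain ⟨N, hN⟩ := hN
      exact absurd h (hF.green_pos hd hC hφ hV hN).ne'
    · exact ⟨max (φ p) M, fun n => hF.iterate_escape (not_exists.1 hN n)⟩
  · have hdecay : Tendsto (fun n : ℕ => (d ^ n)⁻¹ * T) atTop (𝓝 0) := by
      simpa using
        (tendsto_inv_atTop_zero.comp (tendsto_pow_atTop_atTop_of_one_lt hd)).mul_const T
    refine tendsto_nhds_unique (hF.tendsto_greenApprox hd hC hφ p) (squeeze_zero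
      (fun n => mul_nonneg (by positivity) (hφ _)) (fun n => ?_) hdecay)
    exact mul_le_mul_of_nonneg_left (hT n) (by positivity)

theorem continuous_green [TopologicalSpace X] (hf : Continuous f) (hφc : Continuous φ) :
    Continuous (green f φ d) :=
  continuous_iff_continuousAt.2 fun x =>
    ((hF.tendstoUniformlyOn_greenApprox hd hC hφ (φ x + 1)).continuousOn
      (.of_forall fun n => (continuous_greenApprox hf hφc n).continuousOn)).continuousAt
      (hφc.continuousAt.preimage_mem_nhds (Iic_mem_nhds (lt_add_one _)))

end DegreeFiltration

end GreenFunction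

section PosLogNorm

variable {E : Type*} [SeminormedAddCommGroup E]

def posLogNorm (p : E) : ℝ := Real.log (max ‖p‖ 1)

theorem posLogNorm_nonneg (p : E) : 0 ≤ posLogNorm p :=
  Real.log_nonneg (le_max_right _ _)

theorem continuous_posLogNorm : Continuous (posLogNorm : E → ℝ) :=
  (continuous_norm.max continuous_const).log fun _ => (one_pos.trans_le (le_max_right _ _)).ne'

theorem posLogNorm_le_of_norm_le {p : E} {R : ℝ} (h : ‖p‖ ≤ R) :
    posLogNorm p ≤ Real.log (max R 1) :=
  Real.log_le_log (by positivity) (max_le_max_right 1 h)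

theorem norm_le_exp_posLogNorm (p : E) : ‖p‖ ≤ Real.exp (posLogNorm p) := by
  rw [posLogNorm, Real.exp_log (by positivity)]
  exact le_max_left _ _

theorem exists_forall_posLogNorm_le_iff {ι : Type*} (u : ι → E) :
    (∃ T, ∀ i, posLogNorm (u i) ≤ T) ↔ ∃ R, ∀ i, ‖u i‖ ≤ R :=
  ⟨fun ⟨T, hT⟩ => ⟨Real.exp T, fun i =>
      (norm_le_exp_posLogNorm _).trans (Real.exp_le_exp.2 (hT i))⟩,
    fun ⟨_, hR⟩ => ⟨_, fun i => posLogNorm_le_of_norm_le (hR i)⟩⟩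

end PosLogNorm

theorem eventually_mul_le_mul_pow {m : ℕ} (hm : 2 ≤ m) {c : ℝ} (hc : 0 < c) (k : ℝ) :
    ∀ᶠ t : ℝ in atTop, k * t ≤ c * t ^ m := by
  filter_upwards [eventually_ge_atTop 1, eventually_ge_atTop (k / c)] with t ht1 htk
  have h2 : t ^ 2 ≤ t ^ m := pow_le_pow_right₀ ht1 hm
  rw [div_le_iff₀ hc] at htk
  nlinarith

namespace Polynomial

variable {𝕜 : Type*} [NormedField 𝕜]

theorem exists_norm_eval_le_mul_max_pow (P : 𝕜[X]) :
    ∃ K, 0 ≤ K ∧ ∀ y, ‖P.eval y‖ ≤ K * max ‖y‖ 1 ^ P.natDegree := by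
  refine ⟨∑ i ∈ Finset.range (P.natDegree + 1), ‖P.coeff i‖, by positivity, fun y => ?_⟩
  rw [eval_eq_sum_range, Finset.sum_mul]
  refine (norm_sum_le _ _).trans (Finset.sum_le_sum fun i hi => ?_)
  rw [norm_mul, norm_pow]
  gcongr
  calc ‖y‖ ^ i ≤ max ‖y‖ 1 ^ i := by gcongr; exact le_max_left _ _
    _ ≤ max ‖y‖ 1 ^ P.natDegree :=
      pow_le_pow_right₀ (le_max_right _ _) (Nat.lt_succ_iff.1 (Finset.mem_range.1 hi))

theorem eventually_norm_eval_ge (P : 𝕜[X]) :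
    ∀ᶠ y in Bornology.cobounded 𝕜, ‖P.leadingCoeff‖ / 2 * ‖y‖ ^ P.natDegree ≤ ‖P.eval y‖ := by
  filter_upwards [(isEquivalent_cobounded_leading_monomial (P := P)).isLittleO.def
    (one_half_pos (α := ℝ))] with y hy
  have htri := norm_sub_norm_le (P.leadingCoeff * y ^ P.natDegree) (P.eval y)
  rw [norm_sub_rev] at htri
  rw [Pi.sub_apply] at hy
  rw [norm_mul, norm_pow] at hy htri
  linarith

theorem exists_mul_le_mul_pow_le_norm_eval {P : 𝕜[X]} (hm : 2 ≤ P.natDegree) (k : ℝ) :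
    ∃ c > 0, ∃ R₀, ∀ y : 𝕜, R₀ ≤ ‖y‖ →
      k * ‖y‖ ≤ c * ‖y‖ ^ P.natDegree ∧ 2 * c * ‖y‖ ^ P.natDegree ≤ ‖P.eval y‖ := by
  have hP : P ≠ 0 := by rintro rfl; simp at hm
  have hc : 0 < ‖P.leadingCoeff‖ / 4 :=
    div_pos (norm_pos_iff.2 (leadingCoeff_ne_zero.2 hP)) four_pos
  obtain ⟨R₀, -, hR₀⟩ := hasBasis_cobounded_norm.eventually_iff.1 <|
    (tendsto_norm_cobounded_atTop.eventually (eventually_mul_le_mul_pow hm hc k)).and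
      P.eventually_norm_eval_ge
  exact ⟨_, hc, R₀, fun y hy => ⟨(hR₀ hy).1, by linarith [(hR₀ hy).2]⟩⟩

end Polynomial

section HenonMap

open Polynomial

def vPlus (R : ℝ) : Set (ℂ × ℂ) := {p | R ≤ ‖p.2‖ ∧ ‖p.1‖ ≤ ‖p.2‖}

theorem posLogNorm_of_mem_vPlus {R : ℝ} (hR : 1 ≤ R) {p : ℂ × ℂ} (hp : p ∈ vPlus R) :
    posLogNorm p = Real.log ‖p.2‖ := by
  rw [posLogNorm, Prod.norm_def, max_eq_right hp.2, max_eq_left (hR.trans hp.1)]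

theorem continuous_genHenonMap (c : ℂ × ℂ[X]) : Continuous (genHenonMap c) :=
  (continuous_const.mul continuous_snd).prodMk
    (continuous_fst.add (c.2.continuous.comp continuous_snd))

theorem continuous_foldr_genHenonMap (L : List (ℂ × ℂ[X])) :
    Continuous ((L.map genHenonMap).foldr (· ∘ ·) id) := by
  induction L with
  | nil => exact continuous_id
  | cons c L ih => exact (continuous_genHenonMap c).comp ih

variable {a : ℂ} {P : ℂ[X]}

theorem norm_genHenonMap_le (hm : 1 ≤ P.natDegree) {K : ℝ} (hK0 : 0 ≤ K)
    (hK : ∀ y, ‖P.eval y‖ ≤ K * max ‖y‖ 1 ^ P.natDegree) (p : ℂ × ℂ) :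
    ‖genHenonMap (a, P) p‖ ≤ (‖a‖ + 1 + K) * max ‖p‖ 1 ^ P.natDegree := by
  set t := max ‖p‖ 1
  have ht : 1 ≤ t := le_max_right _ _
  have htm : t ≤ t ^ P.natDegree := le_self_pow₀ ht (by omega)
  have hx : ‖p.1‖ ≤ t := (norm_fst_le p).trans (le_max_left _ _)
  have hay : ‖a‖ * ‖p.2‖ ≤ ‖a‖ * t ^ P.natDegree :=
    mul_le_mul_of_nonneg_left (((norm_snd_le p).trans (le_max_left _ _)).trans htm)
      (norm_nonneg a)
  have hPy : ‖P.eval p.2‖ ≤ K * t ^ P.natDegree :=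
    (hK p.2).trans (by gcongr; exact max_le_max_right 1 (norm_snd_le p))
  have hKt : 0 ≤ K * t ^ P.natDegree := by positivity
  have hat : 0 ≤ ‖a‖ * t ^ P.natDegree := by positivity
  simp only [genHenonMap, Prod.norm_def, norm_mul]
  refine max_le ?_ ((norm_add_le _ _).trans ?_) <;> linarith

theorem posLogNorm_genHenonMap_le (hm : 1 ≤ P.natDegree) {K : ℝ} (hK0 : 0 ≤ K)
    (hK : ∀ y, ‖P.eval y‖ ≤ K * max ‖y‖ 1 ^ P.natDegree) (p : ℂ × ℂ) :
    posLogNorm (genHenonMap (a, P) p) ≤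
      P.natDegree * posLogNorm p + Real.log (‖a‖ + 1 + K) := by
  have hA : 1 ≤ ‖a‖ + 1 + K := by linarith [norm_nonneg a]
  have ht : 1 ≤ max ‖p‖ 1 ^ P.natDegree := one_le_pow₀ (le_max_right _ _)
  calc posLogNorm (genHenonMap (a, P) p)
      ≤ Real.log ((‖a‖ + 1 + K) * max ‖p‖ 1 ^ P.natDegree) :=
        Real.log_le_log (by positivity)
          (max_le (norm_genHenonMap_le hm hK0 hK p) (one_le_mul_of_one_le_of_one_le hA ht))
    _ = P.natDegree * posLogNorm p + Real.log (‖a‖ + 1 + K) := by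
        rw [Real.log_mul (by positivity) (by positivity), Real.log_pow, posLogNorm, add_comm]

section LargeY

variable {c R₀ R : ℝ}
  (hlarge : ∀ y : ℂ, R₀ ≤ ‖y‖ →
    (1 + ‖a‖) * ‖y‖ ≤ c * ‖y‖ ^ P.natDegree ∧ 2 * c * ‖y‖ ^ P.natDegree ≤ ‖P.eval y‖)
include hlarge

theorem mul_norm_pow_le_norm_genHenonMap_snd (hR : R₀ ≤ R) {p : ℂ × ℂ} (hp : p ∈ vPlus R) :
    c * ‖p.2‖ ^ P.natDegree ≤ ‖(genHenonMap (a, P) p).2‖ := by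
  obtain ⟨hlin, hpoly⟩ := hlarge p.2 (hR.trans hp.1)
  have htri := norm_le_add_norm_add' p.1 (P.eval p.2)
  simp only [genHenonMap]
  nlinarith [hp.2, mul_nonneg (norm_nonneg a) (norm_nonneg p.2)]

theorem mapsTo_genHenonMap_vPlus (hR : R₀ ≤ R) :
    MapsTo (genHenonMap (a, P)) (vPlus R) (vPlus R) := by
  intro p hp
  have hsnd := mul_norm_pow_le_norm_genHenonMap_snd hlarge hR hp
  have hlin := (hlarge p.2 (hR.trans hp.1)).1
  have hfst : ‖(genHenonMap (a, P) p).1‖ = ‖a‖ * ‖p.2‖ := norm_mul a p.2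
  have := mul_nonneg (norm_nonneg a) (norm_nonneg p.2)
  exact ⟨by nlinarith [hp.1], by nlinarith [norm_nonneg p.2]⟩

theorem genHenonMap_escape (hR : R₀ ≤ R) {q : ℂ × ℂ} (hq : genHenonMap (a, P) q ∉ vPlus R) :
    ‖genHenonMap (a, P) q‖ ≤ ‖q‖ ∨ ‖genHenonMap (a, P) q‖ ≤ (1 + ‖a‖) * R := by
  have hfst : ‖(genHenonMap (a, P) q).1‖ = ‖a‖ * ‖q.2‖ := norm_mul a q.2
  have hbound : ‖genHenonMap (a, P) q‖ ≤ max R (‖a‖ * ‖q.2‖) := by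
    rw [Prod.norm_def, hfst]
    refine max_le (le_max_right _ _) (not_lt.1 fun h => hq ?_)
    exact ⟨(le_max_left _ _).trans h.le, hfst ▸ (le_max_right _ _).trans h.le⟩
  have := mul_nonneg (norm_nonneg a) (norm_nonneg q.2)
  by_cases hy : ‖q.2‖ ≤ R
  · right
    refine hbound.trans (max_le ?_ ?_) <;>
      nlinarith [norm_nonneg q.2, mul_le_mul_of_nonneg_left hy (norm_nonneg a)]
  · left
    obtain ⟨hlin, hpoly⟩ := hlarge q.2 (hR.trans (not_le.1 hy).le)
    have hmax : max R (‖a‖ * ‖q.2‖) ≤ c * ‖q.2‖ ^ P.natDegree :=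
      (max_le (by nlinarith [not_le.1 hy]) (by nlinarith [norm_nonneg q.2])).trans hlin
    have htri := norm_le_add_norm_add' q.1 (P.eval q.2)
    have hsnd : ‖q.1 + P.eval q.2‖ ≤ max R (‖a‖ * ‖q.2‖) :=
      (norm_snd_le (genHenonMap (a, P) q)).trans hbound
    exact hbound.trans (by linarith [norm_fst_le q])

end LargeY

theorem exists_degreeFiltration_genHenonMap (hm : 2 ≤ P.natDegree) :
    ∃ C, 0 ≤ C ∧ ∃ R₀, 1 ≤ R₀ ∧ ∀ R, R₀ ≤ R →
      ∃ M, DegreeFiltration (genHenonMap (a, P)) posLogNorm (vPlus R) P.natDegree C M := by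
  obtain ⟨K, hK0, hK⟩ := P.exists_norm_eval_le_mul_max_pow
  obtain ⟨c, hc, R₀, hlarge⟩ := exists_mul_le_mul_pow_le_norm_eval hm (1 + ‖a‖)
  have hlogA : 0 ≤ Real.log (‖a‖ + 1 + K) := Real.log_nonneg (by linarith [norm_nonneg a])
  refine ⟨max (Real.log (‖a‖ + 1 + K)) (-Real.log c), hlogA.trans (le_max_left _ _),
    max R₀ 1, le_max_right _ _, fun R hR => ⟨Real.log (max ((1 + ‖a‖) * R) 1), ?_, ?_, ?_, ?_⟩⟩
  · intro p
    linarith [posLogNorm_genHenonMap_le (a := a) (by omega) hK0 hK p,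
      le_max_left (Real.log (‖a‖ + 1 + K)) (-Real.log c)]
  · exact mapsTo_genHenonMap_vPlus hlarge (le_of_max_le_left hR)
  · intro p hp
    have hR1 : 1 ≤ R := le_of_max_le_right hR
    have hy : 0 < ‖p.2‖ := one_pos.trans_le (hR1.trans hp.1)
    have hlog := Real.log_le_log (by positivity)
      (mul_norm_pow_le_norm_genHenonMap_snd hlarge (le_of_max_le_left hR) hp)
    rw [Real.log_mul hc.ne' (by positivity), Real.log_pow] at hlog
    rw [posLogNorm_of_mem_vPlus hR1 hp,
      posLogNorm_of_mem_vPlus hR1 (mapsTo_genHenonMap_vPlus hlarge (le_of_max_le_left hR) hp)]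
    linarith [le_max_right (Real.log (‖a‖ + 1 + K)) (-Real.log c)]
  · intro q hq
    rcases genHenonMap_escape hlarge (le_of_max_le_left hR) hq with h | h
    · exact (posLogNorm_le_of_norm_le h).trans (le_max_left _ _)
    · exact (posLogNorm_le_of_norm_le h).trans (le_max_right _ _)

theorem exists_degreeFiltration_foldr_genHenonMap (L : List (ℂ × ℂ[X]))
    (hL : ∀ c ∈ L, 2 ≤ c.2.natDegree) :
    ∃ C, 0 ≤ C ∧ ∃ R₀, 1 ≤ R₀ ∧ ∀ R, R₀ ≤ R →
      ∃ M, DegreeFiltration ((L.map genHenonMap).foldr (· ∘ ·) id) posLogNorm (vPlus R)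
        ((L.map fun c => c.2.natDegree).prod : ℕ) C M := by
  induction L with
  | nil => exact ⟨0, le_rfl, 1, le_rfl, fun R _ => ⟨0, by simpa using DegreeFiltration.id 0⟩⟩
  | cons c L ih =>
    obtain ⟨a, P⟩ := c
    obtain ⟨C₁, hC₁, R₁, hR₁, h₁⟩ :=
      exists_degreeFiltration_genHenonMap (a := a) (hL _ (.head _))
    obtain ⟨C₂, hC₂, R₂, -, h₂⟩ := ih fun c hc => hL c (.tail _ hc)
    refine ⟨P.natDegree * C₂ + C₁, by positivity, max R₁ R₂, le_max_of_le_left hR₁,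
      fun R hR => ?_⟩
    obtain ⟨M₁, hM₁⟩ := h₁ R (le_of_max_le_left hR)
    obtain ⟨M₂, hM₂⟩ := h₂ R (le_of_max_le_right hR)
    exact ⟨max M₁ M₂, by simpa using hM₁.comp hM₂ (Nat.cast_nonneg _)⟩

end HenonMap

theorem statement13_general (f : ℂ × ℂ → ℂ × ℂ)
    (L : List (ℂ × Polynomial ℂ))
    (hcoef : ∀ c ∈ L, c.1 ≠ 0 ∧ 2 ≤ c.2.natDegree)
    (hf : f = (L.map genHenonMap).foldr (· ∘ ·) id)
    (d : ℕ) (hd : d = (L.map fun c => c.2.natDegree).prod) (hd2 : 2 ≤ d) :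
    ∃ G : ℂ × ℂ → ℝ, Continuous G ∧ (∀ p, 0 ≤ G p) ∧
      (∀ B : Set (ℂ × ℂ), Bornology.IsBounded B →
        TendstoUniformlyOn (fun (n : ℕ) (p : ℂ × ℂ) =>
          ((d : ℝ) ^ n)⁻¹ * Real.log (max ‖f^[n] p‖ 1)) G Filter.atTop B) ∧
      (∀ p, G (f p) = d * G p) ∧
      (∃ Mb : ℝ, ∀ p, G p - Real.log (max ‖p‖ 1) ≤ Mb) ∧
      (∀ p, G p = 0 ↔ ∃ R : ℝ, ∀ n : ℕ, ‖f^[n] p‖ ≤ R) := by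
  obtain ⟨C, hC, R₀, hR₀, hfilt⟩ :=
    exists_degreeFiltration_foldr_genHenonMap L fun c hc => (hcoef c hc).2
  set R := max R₀ (Real.exp (C + 1))
  obtain ⟨M, hF⟩ := hfilt R (le_max_left _ _)
  rw [← hf, ← hd] at hF
  have hd2' : (2 : ℝ) ≤ d := by exact_mod_cast hd2
  have hd1 : (1 : ℝ) < d := by linarith
  have hV : ∀ p ∈ vPlus R, C < (d - 1) * posLogNorm p := by
    intro p hp
    have hlog : C + 1 ≤ posLogNorm p := by
      rw [posLogNorm_of_mem_vPlus (hR₀.trans (le_max_left _ _)) hp, ← Real.log_exp (C + 1)]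
      exact Real.log_le_log (Real.exp_pos _) ((le_max_right _ _).trans hp.1)
    nlinarith [posLogNorm_nonneg p]
  have hφ := posLogNorm_nonneg (E := ℂ × ℂ)
  refine ⟨green f posLogNorm d,
    hF.continuous_green hd1 hC hφ (hf ▸ continuous_foldr_genHenonMap L) continuous_posLogNorm,
    hF.green_nonneg hd1 hC hφ, fun B hB => ?_, hF.green_apply hd1 hC hφ,
    ⟨_, fun p => sub_le_iff_le_add'.2 (hF.green_le hd1 hC hφ p)⟩,
    fun p => (hF.green_eq_zero_iff hd1 hC hφ hV p).trans
      (exists_forall_posLogNorm_le_iff fun n => f^[n] p)⟩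
  obtain ⟨S, hS⟩ := isBounded_iff_forall_norm_le.1 hB
  exact (hF.tendstoUniformlyOn_greenApprox hd1 hC hφ _).mono fun p hp =>
    posLogNorm_le_of_norm_le (hS p hp)

/-- the Green function `G⁺` of a composition of generalized Hénon maps. -/
theorem statement13 (f : ℂ × ℂ → ℂ × ℂ)
    (L : List (ℂ × Polynomial ℂ)) (hL : L ≠ [])
    (hcoef : ∀ c ∈ L, c.1 ≠ 0 ∧ 2 ≤ c.2.natDegree)
    (hf : f = (L.map genHenonMap).foldr (· ∘ ·) id)
    (d : ℕ) (hd : d = (L.map fun c => c.2.natDegree).prod) (hd2 : 2 ≤ d) :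
    ∃ G : ℂ × ℂ → ℝ, Continuous G ∧ (∀ p, 0 ≤ G p) ∧
      (∀ B : Set (ℂ × ℂ), Bornology.IsBounded B →
        TendstoUniformlyOn (fun (n : ℕ) (p : ℂ × ℂ) =>
          ((d : ℝ) ^ n)⁻¹ * Real.log (max ‖f^[n] p‖ 1)) G Filter.atTop B) ∧
      (∀ p, G (f p) = d * G p) ∧
      (∃ Mb : ℝ, ∀ p, G p - Real.log (max ‖p‖ 1) ≤ Mb) ∧
      (∀ p, G p = 0 ↔ ∃ R : ℝ, ∀ n : ℕ, ‖f^[n] p‖ ≤ R) :=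
  statement13_general f L hcoef hf d hd hd2
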